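/- Every element of Γ'[4] that is not in Γ[8] has no fixed point in the extended upper half-plane ℍ* = ℍ ∪ ℚ ∪ {∞}; more precisely, every such element, after multiplication by an element of Γ[8], is congruent mod 8 to one of (1 4; 4 1), (5 4; 0 5), (5 0; 4 5), and no matrix in SL(2,ℤ) with one of these congruence classes mod 8 has absolute trace at most 2. -/
import Mathlib

open CongruenceSubgroup

/-- The set `Γ'[4]` of matrices in `Γ[4]` with `a + b + c ≡ 1 mod 8`. -/
def GammaPrime4 : Set (Matrix.SpecialLinearGroup (Fin 2) ℤ) :=
  {M | M ∈ Gamma 4 ∧ ((M 0 0 + M 0 1 + M 1 0 : ℤ) : ZMod 8) = 1}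

/-- Reduction of an integral special linear matrix modulo 8. -/
def redMod8 : Matrix.SpecialLinearGroup (Fin 2) ℤ →* Matrix.SpecialLinearGroup (Fin 2) (ZMod 8) :=
  Matrix.SpecialLinearGroup.map (Int.castRingHom (ZMod 8))

/-- The three relevant residue classes mod 8. -/
def targetsMod8 : Set (Matrix.SpecialLinearGroup (Fin 2) (ZMod 8)) :=
  {⟨!![1, 4; 4, 1], by decide⟩, ⟨!![5, 4; 0, 5], by decide⟩, ⟨!![5, 0; 4, 5], by decide⟩}

private lemma key (α β γ δ : ZMod 8)
    (ha : ZMod.castHom (by norm_num : (4:ℕ) ∣ 8) (ZMod 4) α = 1)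
    (hb : ZMod.castHom (by norm_num : (4:ℕ) ∣ 8) (ZMod 4) β = 0)
    (hc : ZMod.castHom (by norm_num : (4:ℕ) ∣ 8) (ZMod 4) γ = 0)
    (hd : ZMod.castHom (by norm_num : (4:ℕ) ∣ 8) (ZMod 4) δ = 1)
    (hdet : α * δ - β * γ = 1) (hsum : α + β + γ = 1)
    (hne : ¬(α = 1 ∧ β = 0 ∧ γ = 0 ∧ δ = 1)) :
    (α = 1 ∧ β = 4 ∧ γ = 4 ∧ δ = 1) ∨ (α = 5 ∧ β = 4 ∧ γ = 0 ∧ δ = 5) ∨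
    (α = 5 ∧ β = 0 ∧ γ = 4 ∧ δ = 5) := by
  revert ha hb hc hd hdet hsum hne
  revert α β γ δ
  decide

private lemma red_entry (M : Matrix.SpecialLinearGroup (Fin 2) ℤ) (i j : Fin 2) :
    (redMod8 M : Matrix (Fin 2) (Fin 2) (ZMod 8)) i j = ((M i j : ℤ) : ZMod 8) := by
  simp [redMod8]

theorem gammaPrime4_minus_gamma8_trace :
    (∀ M ∈ GammaPrime4, M ∉ Gamma 8 →
      ∃ A ∈ Gamma 8, redMod8 (A * M) ∈ targetsMod8) ∧
    (∀ N : Matrix.SpecialLinearGroup (Fin 2) ℤ, redMod8 N ∈ targetsMod8 →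
      ¬ |N 0 0 + N 1 1| ≤ 2) := by
  constructor
  · intro M hM hM8
    refine ⟨1, Subgroup.one_mem _, ?_⟩
    rw [one_mul]
    obtain ⟨hM4, hsumZ⟩ := hM
    rw [Gamma_mem] at hM4 hM8
    set a : ℤ := M 0 0 with ha'
    set b : ℤ := M 0 1 with hb'
    set c : ℤ := M 1 0 with hc'
    set d : ℤ := M 1 1 with hd'
    have hdetZ : a * d - b * c = 1 := by
      have := M.prop
      rw [Matrix.det_fin_two] at this
      exact this
    have hdet8 : ((a : ZMod 8) * d - b * c : ZMod 8) = 1 := by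
      have : ((a * d - b * c : ℤ) : ZMod 8) = ((1 : ℤ) : ZMod 8) := by rw [hdetZ]
      push_cast at this
      exact_mod_cast this
    have hsum8 : ((a : ZMod 8) + b + c) = 1 := by
      push_cast at hsumZ; exact_mod_cast hsumZ
    have hcast := fun (x : ℤ) => (map_intCast
      (ZMod.castHom (by norm_num : (4:ℕ) ∣ 8) (ZMod 4)) x : _)
    have hk := key (a : ZMod 8) (b : ZMod 8) (c : ZMod 8) (d : ZMod 8)
      (by rw [hcast a]; exact_mod_cast hM4.1)
      (by rw [hcast b]; exact_mod_cast hM4.2.1)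
      (by rw [hcast c]; exact_mod_cast hM4.2.2.1)
      (by rw [hcast d]; exact_mod_cast hM4.2.2.2)
      hdet8 hsum8 (by
        intro ⟨h1, h2, h3, h4⟩
        exact hM8 ⟨h1, h2, h3, h4⟩)
    have ext_helper : ∀ (x y z w : ZMod 8) (h : Matrix.det !![x,y;z,w] = 1),
        (a : ZMod 8) = x → (b : ZMod 8) = y → (c : ZMod 8) = z → (d : ZMod 8) = w →
        redMod8 M = ⟨!![x,y;z,w], h⟩ := by
      intro x y z w h h1 h2 h3 h4
      apply Subtype.ext
      show (redMod8 M : Matrix (Fin 2) (Fin 2) (ZMod 8)) = _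
      ext i j
      fin_cases i <;> fin_cases j <;>
        simp only [red_entry] <;>
        simp [← ha', ← hb', ← hc', ← hd', h1, h2, h3, h4]
    rcases hk with ⟨h1, h2, h3, h4⟩ | ⟨h1, h2, h3, h4⟩ | ⟨h1, h2, h3, h4⟩
    · exact Or.inl (ext_helper 1 4 4 1 (by decide) h1 h2 h3 h4)
    · exact Or.inr (Or.inl (ext_helper 5 4 0 5 (by decide) h1 h2 h3 h4))
    · exact Or.inr (Or.inr (ext_helper 5 0 4 5 (by decide) h1 h2 h3 h4))
  · intro N htgt habs
    set a : ℤ := N 0 0 with ha'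
    set b : ℤ := N 0 1 with hb'
    set c : ℤ := N 1 0 with hc'
    set d : ℤ := N 1 1 with hd'
    have hdetZ : a * d - b * c = 1 := by
      have := N.prop
      rw [Matrix.det_fin_two] at this
      exact this
    rw [abs_le] at habs
    have hdvd : ∀ (x r : ℤ), ((x : ZMod 8) = (r : ZMod 8)) → ∃ k, x = 8 * k + r := by
      intro x r h
      rw [ZMod.intCast_eq_intCast_iff, Int.ModEq] at h
      refine ⟨(x - r) / 8, ?_⟩
      omega
    have hentry : ∀ (x y z w : ZMod 8) (h : Matrix.det !![x,y;z,w] = 1),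
        redMod8 N = ⟨!![x,y;z,w], h⟩ →
        (a : ZMod 8) = x ∧ (b : ZMod 8) = y ∧ (c : ZMod 8) = z ∧ (d : ZMod 8) = w := by
      intro x y z w h heq
      have hmat : (redMod8 N : Matrix (Fin 2) (Fin 2) (ZMod 8)) = !![x,y;z,w] :=
        congrArg Subtype.val heq
      refine ⟨?_, ?_, ?_, ?_⟩ <;>
        [have := congrFun (congrFun hmat 0) 0; have := congrFun (congrFun hmat 0) 1;
         have := congrFun (congrFun hmat 1) 0; have := congrFun (congrFun hmat 1) 1] <;>
        rw [red_entry] at this <;> simpa using this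
    simp only [targetsMod8, Set.mem_insert_iff, Set.mem_singleton_iff] at htgt
    rcases htgt with h | h | h
    · obtain ⟨h1, h2, h3, h4⟩ := hentry _ _ _ _ _ h
      obtain ⟨k, hk⟩ := hdvd a 1 (by exact_mod_cast h1)
      obtain ⟨m, hm⟩ := hdvd b 4 (by exact_mod_cast h2)
      obtain ⟨n, hn⟩ := hdvd c 4 (by exact_mod_cast h3)
      obtain ⟨l, hl⟩ := hdvd d 1 (by exact_mod_cast h4)
      rw [hk, hm, hn, hl] at hdetZ
      have e2 : 64*(k*l) + 8*k + 8*l - 64*(m*n) - 32*m - 32*n - 16 = 0 := by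
        linear_combination hdetZ
      have hb1 : -2 ≤ (8*k+1) + (8*l+1) := by rw [← hk, ← hl]; exact habs.1
      have hb2 : (8*k+1) + (8*l+1) ≤ 2 := by rw [← hk, ← hl]; exact habs.2
      generalize k*l = K at e2
      generalize m*n = L at e2
      omega
    · obtain ⟨h1, h2, h3, h4⟩ := hentry _ _ _ _ _ h
      obtain ⟨k, hk⟩ := hdvd a 5 (by exact_mod_cast h1)
      obtain ⟨m, hm⟩ := hdvd b 4 (by exact_mod_cast h2)
      obtain ⟨n, hn⟩ := hdvd c 0 (by exact_mod_cast h3)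
      obtain ⟨l, hl⟩ := hdvd d 5 (by exact_mod_cast h4)
      rw [hk, hm, hn, hl] at hdetZ
      have e2 : 64*(k*l) + 40*k + 40*l - 64*(m*n) - 32*n + 24 = 0 := by
        linear_combination hdetZ
      have hb1 : -2 ≤ (8*k+5) + (8*l+5) := by rw [← hk, ← hl]; exact habs.1
      have hb2 : (8*k+5) + (8*l+5) ≤ 2 := by rw [← hk, ← hl]; exact habs.2
      generalize k*l = K at e2
      generalize m*n = L at e2
      omega
    · obtain ⟨h1, h2, h3, h4⟩ := hentry _ _ _ _ _ h
      obtain ⟨k, hk⟩ := hdvd a 5 (by exact_mod_cast h1)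
      obtain ⟨m, hm⟩ := hdvd b 0 (by exact_mod_cast h2)
      obtain ⟨n, hn⟩ := hdvd c 4 (by exact_mod_cast h3)
      obtain ⟨l, hl⟩ := hdvd d 5 (by exact_mod_cast h4)
      rw [hk, hm, hn, hl] at hdetZ
      have e2 : 64*(k*l) + 40*k + 40*l - 64*(m*n) - 32*m + 24 = 0 := by
        linear_combination hdetZ
      have hb1 : -2 ≤ (8*k+5) + (8*l+5) := by rw [← hk, ← hl]; exact habs.1
      have hb2 : (8*k+5) + (8*l+5) ≤ 2 := by rw [← hk, ← hl]; exact habs.2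
      generalize k*l = K at e2
      generalize m*n = L at e2
      omega
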